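/- Let u, w : ℝ³ → ℝ be smooth in (t,y,x) and let a : ℝ³ → ℝ be smooth with a_x = u_x w_x − w_{xy}. Define the vector fields A_y = ∂/∂y + (−λ + w_x) ∂/∂x + λ u_x ∂/∂λ and A_t = ∂/∂t + (−λ² + (w_x − u)λ + u w_x − a) ∂/∂x + (u_x λ² + (u u_x + u_y)λ) ∂/∂λ acting on functions of (t,y,x,λ). Then [A_t, A_y] = 0 identically in λ if and only if (u,w) satisfies the modified Einstein–Weyl system: u_{xt} = u_{yy} + u_x u_y + u_x² w_x + u u_{xy} + u_{xy} w_x + u_{xx} a and w_{xt} = u w_{xy} + u_y w_x + w_x w_{xy} + a w_{xx} − a_y, together with the defining relation a_x = u_x w_x − w_{xy}. -/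

import Mathlib

/-- Partial derivatives of a function of `(t, y, x)`. -/
noncomputable def pt3 (f : ℝ → ℝ → ℝ → ℝ) (t y x : ℝ) : ℝ := deriv (fun s => f s y x) t
noncomputable def py3 (f : ℝ → ℝ → ℝ → ℝ) (t y x : ℝ) : ℝ := deriv (fun s => f t s x) y
noncomputable def px3 (f : ℝ → ℝ → ℝ → ℝ) (t y x : ℝ) : ℝ := deriv (fun s => f t y s) x

/-- Partial derivatives of a function of `(t, y, x, λ)`. -/
noncomputable def qt (f : ℝ → ℝ → ℝ → ℝ → ℝ) (t y x l : ℝ) : ℝ := deriv (fun s => f s y x l) t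
noncomputable def qy (f : ℝ → ℝ → ℝ → ℝ → ℝ) (t y x l : ℝ) : ℝ := deriv (fun s => f t s x l) y
noncomputable def qx (f : ℝ → ℝ → ℝ → ℝ → ℝ) (t y x l : ℝ) : ℝ := deriv (fun s => f t y s l) x
noncomputable def ql (f : ℝ → ℝ → ℝ → ℝ → ℝ) (t y x l : ℝ) : ℝ := deriv (fun s => f t y x s) l

/-- `A_y = ∂/∂y + (−λ + w_x) ∂/∂x + λ u_x ∂/∂λ`. -/
noncomputable def Ay (u w : ℝ → ℝ → ℝ → ℝ) (f : ℝ → ℝ → ℝ → ℝ → ℝ) :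
    ℝ → ℝ → ℝ → ℝ → ℝ := fun t y x l =>
  qy f t y x l + (-l + px3 w t y x) * qx f t y x l + l * px3 u t y x * ql f t y x l

/-- `A_t = ∂/∂t + (−λ² + (w_x − u)λ + u w_x − a) ∂/∂x + (u_x λ² + (u u_x + u_y)λ) ∂/∂λ`. -/
noncomputable def At (u w a : ℝ → ℝ → ℝ → ℝ) (f : ℝ → ℝ → ℝ → ℝ → ℝ) :
    ℝ → ℝ → ℝ → ℝ → ℝ := fun t y x l =>
  qt f t y x l
    + (-l ^ 2 + (px3 w t y x - u t y x) * l + u t y x * px3 w t y x - a t y x)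
        * qx f t y x l
    + (px3 u t y x * l ^ 2 + (u t y x * px3 u t y x + py3 u t y x) * l) * ql f t y x l

section generic
variable {E : Type*} [NormedAddCommGroup E] [NormedSpace ℝ E]

lemma D_contDiff {F : E → ℝ} (hF : ContDiff ℝ (⊤ : ℕ∞) F) (v : E) :
    ContDiff ℝ (⊤ : ℕ∞) (fun p => fderiv ℝ F p v) :=
  (hF.fderiv_right (by simp)).clm_apply contDiff_const

lemma D_symm {F : E → ℝ} (hF : ContDiff ℝ (⊤ : ℕ∞) F) (v w : E) (p : E) :
    fderiv ℝ (fun q => fderiv ℝ F q v) p w = fderiv ℝ (fun q => fderiv ℝ F q w) p v := by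
  have hd : Differentiable ℝ (fderiv ℝ F) :=
    (hF.fderiv_right (m := ((⊤ : ℕ∞) : WithTop ℕ∞)) (by simp)).differentiable (by simp)
  have h1 : ∀ v : E, fderiv ℝ (fun q => fderiv ℝ F q v) p
      = (fderiv ℝ (fderiv ℝ F) p).flip v := by
    intro v
    rw [fderiv_clm_apply (hd p) (differentiableAt_const v)]
    simp
  rw [h1 v, h1 w]
  have h2 := second_derivative_symmetric (f := F) (f' := fderiv ℝ F)
    (f'' := fderiv ℝ (fderiv ℝ F) p)
    (fun y => (hF.differentiable (by simp) y).hasFDerivAt) (hd p).hasFDerivAt w v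
  simpa using h2

end generic

/-! ### three variables -/

def unc3 (f : ℝ → ℝ → ℝ → ℝ) : ℝ × ℝ × ℝ → ℝ := fun p => f p.1 p.2.1 p.2.2
def Sm3 (f : ℝ → ℝ → ℝ → ℝ) : Prop := ContDiff ℝ (⊤ : ℕ∞) (unc3 f)

variable {f : ℝ → ℝ → ℝ → ℝ}

lemma hd3t' (hf : Sm3 f) (t y x : ℝ) :
    HasDerivAt (fun s => f s y x) (fderiv ℝ (unc3 f) (t, y, x) (1, 0, 0)) t :=
  by have := ((hf.differentiable (by simp) (t, y, x)).hasFDerivAt.comp_hasDerivAt t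
    (HasDerivAt.prodMk (hasDerivAt_id t) (hasDerivAt_const t (y, x)))); exact this

lemma hd3y' (hf : Sm3 f) (t y x : ℝ) :
    HasDerivAt (fun s => f t s x) (fderiv ℝ (unc3 f) (t, y, x) (0, 1, 0)) y :=
  by have := ((hf.differentiable (by simp) (t, y, x)).hasFDerivAt.comp_hasDerivAt y
    (HasDerivAt.prodMk (hasDerivAt_const y t) (HasDerivAt.prodMk (hasDerivAt_id y) (hasDerivAt_const y x)))); exact this

lemma hd3x' (hf : Sm3 f) (t y x : ℝ) :
    HasDerivAt (fun s => f t y s) (fderiv ℝ (unc3 f) (t, y, x) (0, 0, 1)) x :=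
  by have := ((hf.differentiable (by simp) (t, y, x)).hasFDerivAt.comp_hasDerivAt x
    (HasDerivAt.prodMk (hasDerivAt_const x t) (HasDerivAt.prodMk (hasDerivAt_const x y) (hasDerivAt_id x)))); exact this

lemma pt3_eq (hf : Sm3 f) (t y x : ℝ) :
    pt3 f t y x = fderiv ℝ (unc3 f) (t, y, x) (1, 0, 0) := (hd3t' hf t y x).deriv
lemma py3_eq (hf : Sm3 f) (t y x : ℝ) :
    py3 f t y x = fderiv ℝ (unc3 f) (t, y, x) (0, 1, 0) := (hd3y' hf t y x).deriv
lemma px3_eq (hf : Sm3 f) (t y x : ℝ) :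
    px3 f t y x = fderiv ℝ (unc3 f) (t, y, x) (0, 0, 1) := (hd3x' hf t y x).deriv

lemma hd3t (hf : Sm3 f) (t y x : ℝ) : HasDerivAt (fun s => f s y x) (pt3 f t y x) t := by
  rw [pt3_eq hf]; exact hd3t' hf t y x
lemma hd3y (hf : Sm3 f) (t y x : ℝ) : HasDerivAt (fun s => f t s x) (py3 f t y x) y := by
  rw [py3_eq hf]; exact hd3y' hf t y x
lemma hd3x (hf : Sm3 f) (t y x : ℝ) : HasDerivAt (fun s => f t y s) (px3 f t y x) x := by
  rw [px3_eq hf]; exact hd3x' hf t y x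

lemma unc3_py3 (hf : Sm3 f) : unc3 (py3 f) = fun p => fderiv ℝ (unc3 f) p (0, 1, 0) :=
  funext fun p => py3_eq hf p.1 p.2.1 p.2.2
lemma unc3_px3 (hf : Sm3 f) : unc3 (px3 f) = fun p => fderiv ℝ (unc3 f) p (0, 0, 1) :=
  funext fun p => px3_eq hf p.1 p.2.1 p.2.2

lemma sm3_py3 (hf : Sm3 f) : Sm3 (py3 f) := by
  show ContDiff ℝ (⊤ : ℕ∞) (unc3 (py3 f)); rw [unc3_py3 hf]; exact D_contDiff hf _
lemma sm3_px3 (hf : Sm3 f) : Sm3 (px3 f) := by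
  show ContDiff ℝ (⊤ : ℕ∞) (unc3 (px3 f)); rw [unc3_px3 hf]; exact D_contDiff hf _

lemma sym3_xy (hf : Sm3 f) (t y x : ℝ) : px3 (py3 f) t y x = py3 (px3 f) t y x := by
  rw [px3_eq (sm3_py3 hf), py3_eq (sm3_px3 hf), unc3_py3 hf, unc3_px3 hf]
  exact D_symm hf _ _ _

/-! ### four variables -/

def unc4 (f : ℝ → ℝ → ℝ → ℝ → ℝ) : ℝ × ℝ × ℝ × ℝ → ℝ := fun p => f p.1 p.2.1 p.2.2.1 p.2.2.2
def Sm4 (f : ℝ → ℝ → ℝ → ℝ → ℝ) : Prop := ContDiff ℝ (⊤ : ℕ∞) (unc4 f)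

variable {g : ℝ → ℝ → ℝ → ℝ → ℝ}

lemma hd4t' (hg : Sm4 g) (t y x l : ℝ) :
    HasDerivAt (fun s => g s y x l) (fderiv ℝ (unc4 g) (t, y, x, l) (1, 0, 0, 0)) t :=
  by have := ((hg.differentiable (by simp) (t, y, x, l)).hasFDerivAt.comp_hasDerivAt t
    (HasDerivAt.prodMk (hasDerivAt_id t) (hasDerivAt_const t (y, x, l)))); exact this

lemma hd4y' (hg : Sm4 g) (t y x l : ℝ) :
    HasDerivAt (fun s => g t s x l) (fderiv ℝ (unc4 g) (t, y, x, l) (0, 1, 0, 0)) y :=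
  by have := ((hg.differentiable (by simp) (t, y, x, l)).hasFDerivAt.comp_hasDerivAt y
    (HasDerivAt.prodMk (hasDerivAt_const y t) (HasDerivAt.prodMk (hasDerivAt_id y) (hasDerivAt_const y (x, l))))); exact this

lemma hd4x' (hg : Sm4 g) (t y x l : ℝ) :
    HasDerivAt (fun s => g t y s l) (fderiv ℝ (unc4 g) (t, y, x, l) (0, 0, 1, 0)) x :=
  by have := ((hg.differentiable (by simp) (t, y, x, l)).hasFDerivAt.comp_hasDerivAt x
    (HasDerivAt.prodMk (hasDerivAt_const x t) (HasDerivAt.prodMk (hasDerivAt_const x y)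
      (HasDerivAt.prodMk (hasDerivAt_id x) (hasDerivAt_const x l))))); exact this

lemma hd4l' (hg : Sm4 g) (t y x l : ℝ) :
    HasDerivAt (fun s => g t y x s) (fderiv ℝ (unc4 g) (t, y, x, l) (0, 0, 0, 1)) l :=
  by have := ((hg.differentiable (by simp) (t, y, x, l)).hasFDerivAt.comp_hasDerivAt l
    (HasDerivAt.prodMk (hasDerivAt_const l t) (HasDerivAt.prodMk (hasDerivAt_const l y)
      (HasDerivAt.prodMk (hasDerivAt_const l x) (hasDerivAt_id l))))); exact this

lemma qt_eq (hg : Sm4 g) (t y x l : ℝ) :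
    qt g t y x l = fderiv ℝ (unc4 g) (t, y, x, l) (1, 0, 0, 0) := (hd4t' hg t y x l).deriv
lemma qy_eq (hg : Sm4 g) (t y x l : ℝ) :
    qy g t y x l = fderiv ℝ (unc4 g) (t, y, x, l) (0, 1, 0, 0) := (hd4y' hg t y x l).deriv
lemma qx_eq (hg : Sm4 g) (t y x l : ℝ) :
    qx g t y x l = fderiv ℝ (unc4 g) (t, y, x, l) (0, 0, 1, 0) := (hd4x' hg t y x l).deriv
lemma ql_eq (hg : Sm4 g) (t y x l : ℝ) :
    ql g t y x l = fderiv ℝ (unc4 g) (t, y, x, l) (0, 0, 0, 1) := (hd4l' hg t y x l).deriv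

lemma hd4t (hg : Sm4 g) (t y x l : ℝ) :
    HasDerivAt (fun s => g s y x l) (qt g t y x l) t := by
  rw [qt_eq hg]; exact hd4t' hg t y x l
lemma hd4y (hg : Sm4 g) (t y x l : ℝ) :
    HasDerivAt (fun s => g t s x l) (qy g t y x l) y := by
  rw [qy_eq hg]; exact hd4y' hg t y x l
lemma hd4x (hg : Sm4 g) (t y x l : ℝ) :
    HasDerivAt (fun s => g t y s l) (qx g t y x l) x := by
  rw [qx_eq hg]; exact hd4x' hg t y x l
lemma hd4l (hg : Sm4 g) (t y x l : ℝ) :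
    HasDerivAt (fun s => g t y x s) (ql g t y x l) l := by
  rw [ql_eq hg]; exact hd4l' hg t y x l

lemma unc4_qt (hg : Sm4 g) : unc4 (qt g) = fun p => fderiv ℝ (unc4 g) p (1, 0, 0, 0) :=
  funext fun p => qt_eq hg p.1 p.2.1 p.2.2.1 p.2.2.2
lemma unc4_qy (hg : Sm4 g) : unc4 (qy g) = fun p => fderiv ℝ (unc4 g) p (0, 1, 0, 0) :=
  funext fun p => qy_eq hg p.1 p.2.1 p.2.2.1 p.2.2.2
lemma unc4_qx (hg : Sm4 g) : unc4 (qx g) = fun p => fderiv ℝ (unc4 g) p (0, 0, 1, 0) :=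
  funext fun p => qx_eq hg p.1 p.2.1 p.2.2.1 p.2.2.2
lemma unc4_ql (hg : Sm4 g) : unc4 (ql g) = fun p => fderiv ℝ (unc4 g) p (0, 0, 0, 1) :=
  funext fun p => ql_eq hg p.1 p.2.1 p.2.2.1 p.2.2.2

lemma sm4_qt (hg : Sm4 g) : Sm4 (qt g) := by
  show ContDiff ℝ (⊤ : ℕ∞) (unc4 (qt g)); rw [unc4_qt hg]; exact D_contDiff hg _
lemma sm4_qy (hg : Sm4 g) : Sm4 (qy g) := by
  show ContDiff ℝ (⊤ : ℕ∞) (unc4 (qy g)); rw [unc4_qy hg]; exact D_contDiff hg _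
lemma sm4_qx (hg : Sm4 g) : Sm4 (qx g) := by
  show ContDiff ℝ (⊤ : ℕ∞) (unc4 (qx g)); rw [unc4_qx hg]; exact D_contDiff hg _
lemma sm4_ql (hg : Sm4 g) : Sm4 (ql g) := by
  show ContDiff ℝ (⊤ : ℕ∞) (unc4 (ql g)); rw [unc4_ql hg]; exact D_contDiff hg _

lemma sym4_yt (hg : Sm4 g) (t y x l : ℝ) : qy (qt g) t y x l = qt (qy g) t y x l := by
  rw [qy_eq (sm4_qt hg), qt_eq (sm4_qy hg), unc4_qt hg, unc4_qy hg]; exact D_symm hg _ _ _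
lemma sym4_xt (hg : Sm4 g) (t y x l : ℝ) : qx (qt g) t y x l = qt (qx g) t y x l := by
  rw [qx_eq (sm4_qt hg), qt_eq (sm4_qx hg), unc4_qt hg, unc4_qx hg]; exact D_symm hg _ _ _
lemma sym4_lt (hg : Sm4 g) (t y x l : ℝ) : ql (qt g) t y x l = qt (ql g) t y x l := by
  rw [ql_eq (sm4_qt hg), qt_eq (sm4_ql hg), unc4_qt hg, unc4_ql hg]; exact D_symm hg _ _ _
lemma sym4_yx (hg : Sm4 g) (t y x l : ℝ) : qy (qx g) t y x l = qx (qy g) t y x l := by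
  rw [qy_eq (sm4_qx hg), qx_eq (sm4_qy hg), unc4_qx hg, unc4_qy hg]; exact D_symm hg _ _ _
lemma sym4_yl (hg : Sm4 g) (t y x l : ℝ) : qy (ql g) t y x l = ql (qy g) t y x l := by
  rw [qy_eq (sm4_ql hg), ql_eq (sm4_qy hg), unc4_ql hg, unc4_qy hg]; exact D_symm hg _ _ _
lemma sym4_lx (hg : Sm4 g) (t y x l : ℝ) : ql (qx g) t y x l = qx (ql g) t y x l := by
  rw [ql_eq (sm4_qx hg), qx_eq (sm4_ql hg), unc4_qx hg, unc4_ql hg]; exact D_symm hg _ _ _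

lemma Ay_apply (u w : ℝ → ℝ → ℝ → ℝ) (f : ℝ → ℝ → ℝ → ℝ → ℝ) (t y x l : ℝ) :
    Ay u w f t y x l = qy f t y x l + (-l + px3 w t y x) * qx f t y x l
      + l * px3 u t y x * ql f t y x l := rfl

lemma At_apply (u w a : ℝ → ℝ → ℝ → ℝ) (f : ℝ → ℝ → ℝ → ℝ → ℝ) (t y x l : ℝ) :
    At u w a f t y x l = qt f t y x l
      + (-l ^ 2 + (px3 w t y x - u t y x) * l + u t y x * px3 w t y x - a t y x)
          * qx f t y x l
      + (px3 u t y x * l ^ 2 + (u t y x * px3 u t y x + py3 u t y x) * l) * ql f t y x l := rfl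

lemma comm_eval (u w a : ℝ → ℝ → ℝ → ℝ) (hu : Sm3 u) (hw : Sm3 w) (ha : Sm3 a)
    (ψ : ℝ → ℝ → ℝ → ℝ → ℝ) (hψ : Sm4 ψ) (t y x l : ℝ) :
    At u w a (Ay u w ψ) t y x l - Ay u w (At u w a ψ) t y x l =
      ((pt3 (px3 w) t y x
          - (u t y x * py3 (px3 w) t y x + py3 u t y x * px3 w t y x
             + px3 w t y x * py3 (px3 w) t y x + a t y x * px3 (px3 w) t y x - py3 a t y x))
        + (px3 w t y x - l) * (px3 a t y x - (px3 u t y x * px3 w t y x - py3 (px3 w) t y x)))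
        * qx ψ t y x l
      + l * (pt3 (px3 u) t y x
          - (py3 (py3 u) t y x + px3 u t y x * py3 u t y x
             + (px3 u t y x) ^ 2 * px3 w t y x + u t y x * py3 (px3 u) t y x
             + py3 (px3 u) t y x * px3 w t y x + px3 (px3 u) t y x * a t y x))
        * ql ψ t y x l := by
  -- derivative of `t ↦ Ay u w ψ t y x l`
  have h1 := ((hd4t (sm4_qy hψ) t y x l).add
      (((hasDerivAt_const t (-l)).add (hd3t (sm3_px3 hw) t y x)).mul
        (hd4t (sm4_qx hψ) t y x l))).add
      (((hasDerivAt_const t l).mul (hd3t (sm3_px3 hu) t y x)).mul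
        (hd4t (sm4_ql hψ) t y x l))
  have e1 : qt (Ay u w ψ) t y x l = _ := h1.deriv
  -- derivative of `x ↦ Ay u w ψ t y x l`
  have h2 := ((hd4x (sm4_qy hψ) t y x l).add
      (((hasDerivAt_const x (-l)).add (hd3x (sm3_px3 hw) t y x)).mul
        (hd4x (sm4_qx hψ) t y x l))).add
      (((hasDerivAt_const x l).mul (hd3x (sm3_px3 hu) t y x)).mul
        (hd4x (sm4_ql hψ) t y x l))
  have e2 : qx (Ay u w ψ) t y x l = _ := h2.deriv
  -- derivative of `l ↦ Ay u w ψ t y x l`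
  have h3 := ((hd4l (sm4_qy hψ) t y x l).add
      ((((hasDerivAt_id l).neg).add (hasDerivAt_const l (px3 w t y x))).mul
        (hd4l (sm4_qx hψ) t y x l))).add
      (((hasDerivAt_id l).mul_const (px3 u t y x)).mul
        (hd4l (sm4_ql hψ) t y x l))
  have e3 : ql (Ay u w ψ) t y x l = _ := h3.deriv
  -- derivative of `y ↦ At u w a ψ t y x l`
  have hR4 := (((hasDerivAt_const y (-l ^ 2)).add
      (((hd3y (sm3_px3 hw) t y x).sub (hd3y hu t y x)).mul_const l)).add
      ((hd3y hu t y x).mul (hd3y (sm3_px3 hw) t y x))).sub (hd3y ha t y x)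
  have hS4 := ((hd3y (sm3_px3 hu) t y x).mul_const (l ^ 2)).add
      ((((hd3y hu t y x).mul (hd3y (sm3_px3 hu) t y x)).add
        (hd3y (sm3_py3 hu) t y x)).mul_const l)
  have h4 := ((hd4y (sm4_qt hψ) t y x l).add (hR4.mul (hd4y (sm4_qx hψ) t y x l))).add
      (hS4.mul (hd4y (sm4_ql hψ) t y x l))
  have e4 : qy (At u w a ψ) t y x l = _ := h4.deriv
  -- derivative of `x ↦ At u w a ψ t y x l`
  have hR5 := (((hasDerivAt_const x (-l ^ 2)).add
      (((hd3x (sm3_px3 hw) t y x).sub (hd3x hu t y x)).mul_const l)).add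
      ((hd3x hu t y x).mul (hd3x (sm3_px3 hw) t y x))).sub (hd3x ha t y x)
  have hS5 := ((hd3x (sm3_px3 hu) t y x).mul_const (l ^ 2)).add
      ((((hd3x hu t y x).mul (hd3x (sm3_px3 hu) t y x)).add
        (hd3x (sm3_py3 hu) t y x)).mul_const l)
  have h5 := ((hd4x (sm4_qt hψ) t y x l).add (hR5.mul (hd4x (sm4_qx hψ) t y x l))).add
      (hS5.mul (hd4x (sm4_ql hψ) t y x l))
  have e5 : qx (At u w a ψ) t y x l = _ := h5.deriv
  -- derivative of `l ↦ At u w a ψ t y x l`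
  have hsq : HasDerivAt (fun s : ℝ => s ^ 2) (2 * l) l := by
    simpa using hasDerivAt_pow 2 l
  have hR6 := ((hsq.neg.add
      (HasDerivAt.const_mul (px3 w t y x - u t y x) (hasDerivAt_id l))).add_const
      (u t y x * px3 w t y x)).sub_const (a t y x)
  have hS6 := (HasDerivAt.const_mul (px3 u t y x) hsq).add
      (HasDerivAt.const_mul (u t y x * px3 u t y x + py3 u t y x) (hasDerivAt_id l))
  have h6 := ((hd4l (sm4_qt hψ) t y x l).add (hR6.mul (hd4l (sm4_qx hψ) t y x l))).add
      (hS6.mul (hd4l (sm4_ql hψ) t y x l))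
  have e6 : ql (At u w a ψ) t y x l = _ := h6.deriv
  rw [At_apply u w a (Ay u w ψ) t y x l, Ay_apply u w (At u w a ψ) t y x l]
  rw [e1, e2, e3, e4, e5, e6]
  rw [sym4_yt hψ t y x l, sym4_xt hψ t y x l, sym4_lt hψ t y x l, sym4_yx hψ t y x l,
    sym4_yl hψ t y x l, sym4_lx hψ t y x l, sym3_xy hu t y x]
  simp only [id_eq, Pi.add_apply, Pi.sub_apply, Pi.mul_apply, Pi.neg_apply]
  ring

/-- `[A_t, A_y] = 0` identically in `λ` iff `(u, w)` satisfies the modified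
Einstein–Weyl system (with `a_x = u_x w_x − w_{xy}` as a defining relation). -/
theorem modified_einstein_weyl_lax (u w a : ℝ → ℝ → ℝ → ℝ)
    (hu : ContDiff ℝ (⊤ : ℕ∞) (fun p : ℝ × ℝ × ℝ => u p.1 p.2.1 p.2.2))
    (hw : ContDiff ℝ (⊤ : ℕ∞) (fun p : ℝ × ℝ × ℝ => w p.1 p.2.1 p.2.2))
    (ha : ContDiff ℝ (⊤ : ℕ∞) (fun p : ℝ × ℝ × ℝ => a p.1 p.2.1 p.2.2))
    (hax : ∀ t y x : ℝ,
      px3 a t y x = px3 u t y x * px3 w t y x - py3 (px3 w) t y x) :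
    (∀ (ψ : ℝ → ℝ → ℝ → ℝ → ℝ),
        ContDiff ℝ (⊤ : ℕ∞) (fun p : ℝ × ℝ × ℝ × ℝ => ψ p.1 p.2.1 p.2.2.1 p.2.2.2) →
        ∀ t y x l : ℝ, At u w a (Ay u w ψ) t y x l = Ay u w (At u w a ψ) t y x l)
      ↔ (∀ t y x : ℝ,
          (pt3 (px3 u) t y x =
              py3 (py3 u) t y x + px3 u t y x * py3 u t y x
                + (px3 u t y x) ^ 2 * px3 w t y x
                + u t y x * py3 (px3 u) t y x
                + py3 (px3 u) t y x * px3 w t y x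
                + px3 (px3 u) t y x * a t y x)
          ∧ (pt3 (px3 w) t y x =
              u t y x * py3 (px3 w) t y x + py3 u t y x * px3 w t y x
                + px3 w t y x * py3 (px3 w) t y x
                + a t y x * px3 (px3 w) t y x - py3 a t y x)) := by
  have hu3 : Sm3 u := hu
  have hw3 : Sm3 w := hw
  have ha3 : Sm3 a := ha
  constructor
  · intro h t y x
    constructor
    · -- PDE for u, from test function `ψ = λ` at `λ = 1`
      have hψl : Sm4 (fun _ _ _ l : ℝ => l) :=
        contDiff_snd.comp (contDiff_snd.comp contDiff_snd)
      have hc := comm_eval u w a hu3 hw3 ha3 _ hψl t y x 1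
      have he := h (fun _ _ _ l : ℝ => l) hψl t y x 1
      have hqx : qx (fun _ _ _ l : ℝ => l) t y x 1 = 0 := by simp [qx]
      have hql : ql (fun _ _ _ l : ℝ => l) t y x 1 = 1 := by simp [ql]
      rw [hqx, hql] at hc
      linear_combination he - hc
    · -- PDE for w, from test function `ψ = x` at `λ = 0`
      have hψx : Sm4 (fun _ _ x _ : ℝ => x) :=
        contDiff_fst.comp (contDiff_snd.comp contDiff_snd)
      have hc := comm_eval u w a hu3 hw3 ha3 _ hψx t y x 0
      have he := h (fun _ _ x _ : ℝ => x) hψx t y x 0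
      have hqx : qx (fun _ _ x _ : ℝ => x) t y x 0 = 1 := by simp [qx]
      have hql : ql (fun _ _ x _ : ℝ => x) t y x 0 = 0 := by simp [ql]
      rw [hqx, hql] at hc
      linear_combination he - hc - px3 w t y x * hax t y x
  · intro h ψ hψ t y x l
    have hc := comm_eval u w a hu3 hw3 ha3 ψ hψ t y x l
    obtain ⟨h1, h2⟩ := h t y x
    linear_combination hc + qx ψ t y x l * h2
      + (px3 w t y x - l) * qx ψ t y x l * hax t y x
      + l * ql ψ t y x l * h1
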